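/- Let F, G, P be polynomial mappings in z = (z¹, …, zⁿ) ∈ ℂⁿ such that ‖P(z)‖² = (‖F(z)‖² − ‖G(z)‖²)·‖z‖² for all z ∈ ℂⁿ. Then for all but finitely many real t in [0, 1], every polynomial mapping Q in z satisfying ‖Q(z)‖² = (‖F(z)‖² − t·‖G(z)‖²)·‖z‖² for all z ∈ ℂⁿ has linear rank equal to dim_ℂ V_{F⊗z}. -/

import Mathlib

/-!
Two polynomial maps with the same pointwise squared norm span the same space. Indeed
`‖Q(z)‖² = ∑ₖ Qₖ(z) conj (Qₖ(z))` is the restriction to `w = conj z` of the polarization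
`∑ₖ conj(Qₖ)(w) Qₖ(z)`, and a polynomial in `(w, z)` vanishing on `w = conj z` vanishes
identically (substituting `w = x - iy`, `z = x + iy` reduces this to vanishing on real points).
So the polarization depends only on `‖Q‖²`, and so do its coefficients in `w`, the combinations
`∑ₖ conj (coeff_β Qₖ) • Qₖ`. These span `span Q`, because the kernel of `v ↦ ∑ₖ vₖ • Qₖ` is the
orthogonal complement of the conjugated coefficient vectors.

Now `‖P‖² + ‖G ⊗ z‖² = ‖F ⊗ z‖²` gives `span P ⊆ span (F ⊗ z)`, and for `t < 1`,
`‖Q‖² = (1 - t) ‖F ⊗ z‖² + t ‖P‖²` gives `span Q = span (F ⊗ z)`; the exceptional set is `{1}`.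
-/

open MvPolynomial Complex ComplexConjugate

theorem LinearMap.range_eq_span_comp_of_orthogonal_le_ker {𝕜 E M ι : Type*} [RCLike 𝕜]
    [NormedAddCommGroup E] [InnerProductSpace 𝕜 E] [AddCommGroup M] [Module 𝕜 M]
    (L : E →ₗ[𝕜] M) (c : ι → E) [(Submodule.span 𝕜 (Set.range c)).HasOrthogonalProjection]
    (h : (Submodule.span 𝕜 (Set.range c))ᗮ ≤ LinearMap.ker L) :
    LinearMap.range L = Submodule.span 𝕜 (Set.range (L ∘ c)) := by
  set V := Submodule.span 𝕜 (Set.range c)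
  have hker : Vᗮ.map L = ⊥ := LinearMap.le_ker_iff_map.mp h
  rw [Set.range_comp, ← Submodule.map_span, LinearMap.range_eq_map,
    ← Submodule.sup_orthogonal_of_hasOrthogonalProjection (K := V), Submodule.map_sup, hker,
    sup_bot_eq]

theorem Submodule.span_range_sum_elim_smul_eq {K M ι κ : Type*} [Field K] [AddCommGroup M]
    [Module K M] {F : ι → M} {P : κ → M} {c : K} (d : K) (hc : c ≠ 0)
    (hP : Submodule.span K (Set.range P) ≤ Submodule.span K (Set.range F)) :
    Submodule.span K (Set.range (Sum.elim (fun i => c • F i) (fun k => d • P k))) =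
      Submodule.span K (Set.range F) := by
  rw [Set.Sum.elim_range, Submodule.span_union, Set.range_smul, Set.range_smul,
    Submodule.span_smul_eq_of_isUnit _ _ hc.isUnit]
  exact sup_eq_left.mpr ((Submodule.span_smul_le _ _).trans hP)

namespace MvPolynomial

variable {σ ι κ ι' : Type*}

theorem eq_zero_of_eval_conj_eq_zero {p : MvPolynomial (σ ⊕ σ) ℂ}
    (h : ∀ z : σ → ℂ, eval (Sum.elim (conj ∘ z) z) p = 0) : p = 0 := by
  set r := bind₁ (Sum.elim (fun i => X (Sum.inl i) - C I * X (Sum.inr i))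
    (fun i => X (Sum.inl i) + C I * X (Sum.inr i))) p
  have eval_r (x : σ ⊕ σ → ℂ) : eval x r = eval (Sum.elim (fun i => x (.inl i) - I * x (.inr i))
      (fun i => x (.inl i) + I * x (.inr i))) p := by
    refine (eval₂Hom_bind₁ _ _ _ _).trans ?_
    congr 1
    ext (i | i) <;> simp
  have hr : r = 0 := by
    refine funext_set (fun _ => Set.range ((↑) : ℝ → ℂ))
      (fun _ => Set.infinite_range_of_injective ofReal_injective) fun x hx => ?_
    choose y hy using fun j => hx j trivial
    rw [eval_r, map_zero, ← h (fun i => x (.inl i) + I * x (.inr i))]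
    congr 1
    ext (i | i) <;> simp [← hy, conj_ofReal, sub_eq_add_neg]
  refine MvPolynomial.funext fun w => ?_
  have := congrArg (eval (Sum.elim (fun i => (w (.inl i) + w (.inr i)) / 2)
    (fun i => I * (w (.inl i) - w (.inr i)) / 2))) hr
  rw [eval_r, map_zero] at this
  rw [map_zero, ← this]
  refine congrArg (eval · p) ?_
  ext (i | i)
  · simp only [Sum.elim_inl, Sum.elim_inr]
    linear_combination (w (.inl i) - w (.inr i)) / 2 * I_sq
  · simp only [Sum.elim_inl, Sum.elim_inr]
    linear_combination (w (.inr i) - w (.inl i)) / 2 * I_sq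

section

variable [Fintype ι] [Fintype κ] [Fintype ι']

/-- `∑ₖ conj(Qₖ)(w) Qₖ(z)`, with `w` the `Sum.inl` variables and `z` the `Sum.inr` ones. -/
noncomputable def polarizedNormSq (Q : ι → MvPolynomial σ ℂ) : MvPolynomial (σ ⊕ σ) ℂ :=
  ∑ k, rename Sum.inl (map (starRingEnd ℂ) (Q k)) * rename Sum.inr (Q k)

theorem eval_conj_polarizedNormSq (Q : ι → MvPolynomial σ ℂ) (z : σ → ℂ) :
    eval (Sum.elim (conj ∘ z) z) (polarizedNormSq Q) = ∑ k, (normSq (eval z (Q k)) : ℂ) := by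
  simp only [polarizedNormSq, map_sum, map_mul, eval_rename, Sum.elim_comp_inl,
    Sum.elim_comp_inr, eval_map]
  refine Finset.sum_congr rfl fun k _ => ?_
  have conj_eval : eval₂ (starRingEnd ℂ) (conj ∘ z) (Q k) = conj (eval z (Q k)) :=
    (eval₂_comp_left (starRingEnd ℂ) (RingHom.id ℂ) z (Q k)).symm
  rw [conj_eval, mul_comm, mul_conj]

theorem coeff_sumAlgEquiv_polarizedNormSq (Q : ι → MvPolynomial σ ℂ) (β : σ →₀ ℕ) :
    (sumAlgEquiv ℂ σ σ (polarizedNormSq Q)).coeff β = ∑ k, conj ((Q k).coeff β) • Q k := by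
  have inl (a : MvPolynomial σ ℂ) : sumAlgEquiv ℂ σ σ (rename Sum.inl a) = map C a :=
    AlgHom.congr_fun (sumAlgEquiv_comp_rename_inl ℂ σ σ) a
  have inr (a : MvPolynomial σ ℂ) : sumAlgEquiv ℂ σ σ (rename Sum.inr a) = C a :=
    AlgHom.congr_fun (sumAlgEquiv_comp_rename_inr ℂ σ σ) a
  simp [polarizedNormSq, inl, inr, coeff_sum, coeff_map, smul_eq_C_mul, mul_comm]

theorem span_range_eq_span_range_sum_conj_coeff_smul (Q : ι → MvPolynomial σ ℂ) :
    Submodule.span ℂ (Set.range Q) =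
      Submodule.span ℂ (Set.range fun β => ∑ k, conj ((Q k).coeff β) • Q k) := by
  let L := (Fintype.linearCombination ℂ Q).comp (WithLp.linearEquiv 2 ℂ (ι → ℂ)).toLinearMap
  let c (β : σ →₀ ℕ) : EuclideanSpace ℂ ι := WithLp.toLp 2 fun k => conj ((Q k).coeff β)
  have coeff_L (v : EuclideanSpace ℂ ι) (β : σ →₀ ℕ) : (L v).coeff β = inner ℂ (c β) v := by
    simp [L, c, Fintype.linearCombination_apply, coeff_sum, PiLp.inner_apply, mul_comm]
  have range_L : LinearMap.range L = Submodule.span ℂ (Set.range Q) := by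
    rw [LinearMap.range_comp_of_range_eq_top _ (LinearEquiv.range _),
      Fintype.range_linearCombination]
  rw [← range_L, L.range_eq_span_comp_of_orthogonal_le_ker c fun v hv => ?_]
  · rfl
  · refine LinearMap.mem_ker.mpr (MvPolynomial.ext _ _ fun β => ?_)
    rw [coeff_L, coeff_zero]
    exact Submodule.inner_right_of_mem_orthogonal (Submodule.subset_span (Set.mem_range_self β)) hv

theorem span_range_eq_of_sum_normSq_eq (Q : ι → MvPolynomial σ ℂ) (R : κ → MvPolynomial σ ℂ)
    (h : ∀ z, ∑ k, normSq (eval z (Q k)) = ∑ j, normSq (eval z (R j))) :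
    Submodule.span ℂ (Set.range Q) = Submodule.span ℂ (Set.range R) := by
  have polarized_eq : polarizedNormSq Q = polarizedNormSq R := by
    refine sub_eq_zero.mp (eq_zero_of_eval_conj_eq_zero fun z => ?_)
    rw [map_sub, eval_conj_polarizedNormSq, eval_conj_polarizedNormSq, ← ofReal_sum,
      ← ofReal_sum, h, sub_self]
  simp_rw [span_range_eq_span_range_sum_conj_coeff_smul, ← coeff_sumAlgEquiv_polarizedNormSq,
    polarized_eq]

theorem span_range_le_of_sum_normSq_add_eq (P : ι → MvPolynomial σ ℂ)
    (G : κ → MvPolynomial σ ℂ) (F : ι' → MvPolynomial σ ℂ)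
    (h : ∀ z, ∑ k, normSq (eval z (P k)) + ∑ k, normSq (eval z (G k)) =
      ∑ j, normSq (eval z (F j))) :
    Submodule.span ℂ (Set.range P) ≤ Submodule.span ℂ (Set.range F) := by
  rw [← span_range_eq_of_sum_normSq_eq (Sum.elim P G) F (by simpa [Fintype.sum_sum_type] using h),
    Set.Sum.elim_range, Submodule.span_union]
  exact le_sup_left

end

/-- The map `F ⊗ z`. -/
noncomputable def tensorX {R : Type*} [CommSemiring R] (F : ι → MvPolynomial σ R) (ji : ι × σ) :
    MvPolynomial σ R :=
  F ji.1 * X ji.2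

theorem sum_normSq_eval_tensorX [Fintype σ] [Fintype ι] (F : ι → MvPolynomial σ ℂ)
    (z : σ → ℂ) :
    ∑ ji, normSq (eval z (tensorX F ji)) =
      (∑ j, normSq (eval z (F j))) * ∑ i, normSq (z i) := by
  simp [tensorX, Fintype.sum_prod_type, Finset.sum_mul_sum, normSq_mul]

end MvPolynomial

/-- Let `F`, `G`, `P` be polynomial mappings on `ℂⁿ` with
`‖P(z)‖² = (‖F(z)‖² − ‖G(z)‖²)·‖z‖²` for all `z ∈ ℂⁿ`.  Then for all but finitely many real
`t ∈ [0,1]`, every polynomial mapping `Q` with `‖Q(z)‖² = (‖F(z)‖² − t·‖G(z)‖²)·‖z‖²` for all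
`z ∈ ℂⁿ` has linear rank equal to `dim_ℂ V_{F⊗z}`. -/
theorem generic_rank_of_sos_family {n pF pG pP : ℕ}
    (F : Fin pF → MvPolynomial (Fin n) ℂ) (G : Fin pG → MvPolynomial (Fin n) ℂ)
    (P : Fin pP → MvPolynomial (Fin n) ℂ)
    (h : ∀ z : Fin n → ℂ,
      ∑ k, Complex.normSq (MvPolynomial.eval z (P k)) =
        ((∑ j, Complex.normSq (MvPolynomial.eval z (F j))) -
            ∑ k, Complex.normSq (MvPolynomial.eval z (G k))) *
          ∑ i, Complex.normSq (z i)) :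
    ∃ S : Set ℝ, S.Finite ∧
      ∀ t ∈ Set.Icc (0 : ℝ) 1, t ∉ S →
        ∀ (m : ℕ) (Q : Fin m → MvPolynomial (Fin n) ℂ),
          (∀ z : Fin n → ℂ,
            ∑ k, Complex.normSq (MvPolynomial.eval z (Q k)) =
              ((∑ j, Complex.normSq (MvPolynomial.eval z (F j))) -
                  t * ∑ k, Complex.normSq (MvPolynomial.eval z (G k))) *
                ∑ i, Complex.normSq (z i)) →
          Module.finrank ℂ (Submodule.span ℂ (Set.range Q)) =
            Module.finrank ℂ
              (Submodule.span ℂ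
                (Set.range fun ji : Fin pF × Fin n => F ji.1 * MvPolynomial.X ji.2)) := by
  have P_le : Submodule.span ℂ (Set.range P) ≤ Submodule.span ℂ (Set.range (tensorX F)) :=
    span_range_le_of_sum_normSq_add_eq P (tensorX G) (tensorX F) fun z => by
      rw [sum_normSq_eval_tensorX, sum_normSq_eval_tensorX, h]; ring
  refine ⟨{1}, Set.finite_singleton 1, fun t ht ht1 m Q hQ => ?_⟩
  change _ = Module.finrank ℂ (Submodule.span ℂ (Set.range (tensorX F)))
  have hs : ((√(1 - t) : ℝ) : ℂ) ≠ 0 := by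
    simp [Real.sqrt_eq_zero', ht.2.lt_of_ne (by simpa using ht1)]
  rw [span_range_eq_of_sum_normSq_eq Q
      (Sum.elim (fun ji => (√(1 - t) : ℂ) • tensorX F ji) (fun k => (√t : ℂ) • P k)) fun z => ?_,
    Submodule.span_range_sum_elim_smul_eq _ hs P_le]
  simp only [Fintype.sum_sum_type, Sum.elim_inl, Sum.elim_inr, smul_eq_C_mul, map_mul, eval_C,
    normSq_ofReal, ← Finset.mul_sum, sum_normSq_eval_tensorX, hQ, h,
    Real.mul_self_sqrt ht.1, Real.mul_self_sqrt (sub_nonneg.mpr ht.2)]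
  ring
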